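/- arXiv:2506.01143 — 3 statements merged into one kernel-verified Lean document; each statement's English description precedes it below -/
import Mathlib

section
/- Assume A ∈ ℝ^{N×d} and y ∈ ℝ^N satisfy the standing assumption (non-unique case). Then the set L_min of ℓ¹-minimizers is a nonempty, convex and compact subset of ℝ^d; moreover 0 ∉ L_min, and there exists σ ∈ {−1,1}^d such that σ⊙x has all entries ≥ 0 for every x ∈ L_min (where ⊙ denotes the componentwise product). -/
open scoped BigOperators

noncomputable section

/-- The ℓ¹-norm of a vector in ℝ^d. -/
def l1 {d : ℕ} (x : Fin d → ℝ) : ℝ := ∑ i, |x i|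

/-- The set of ℓ¹-minimizers among the solutions of A x = y. -/
def Lmin {N d : ℕ} (A : Matrix (Fin N) (Fin d) ℝ) (y : Fin N → ℝ) : Set (Fin d → ℝ) :=
  { x | A.mulVec x = y ∧ ∀ z, A.mulVec z = y → l1 x ≤ l1 z }

lemma l1_continuous {d : ℕ} : Continuous (l1 (d := d)) := by
  unfold l1
  exact continuous_finset_sum _ fun i _ => (continuous_apply i).abs

lemma abs_le_l1 {d : ℕ} (x : Fin d → ℝ) (i : Fin d) : |x i| ≤ l1 x := by
  unfold l1
  exact Finset.single_le_sum (fun j _ => abs_nonneg (x j)) (Finset.mem_univ i)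

lemma l1_combo {d : ℕ} (x x' : Fin d → ℝ) {a b : ℝ} (ha : 0 ≤ a) (hb : 0 ≤ b) :
    l1 (a • x + b • x') ≤ a * l1 x + b * l1 x' := by
  unfold l1
  rw [Finset.mul_sum, Finset.mul_sum, ← Finset.sum_add_distrib]
  refine Finset.sum_le_sum fun i _ => ?_
  simp only [Pi.add_apply, Pi.smul_apply, smul_eq_mul]
  calc |a * x i + b * x' i| ≤ |a * x i| + |b * x' i| := abs_add_le _ _
    _ = a * |x i| + b * |x' i| := by
        rw [abs_mul, abs_mul, abs_of_nonneg ha, abs_of_nonneg hb]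

lemma mulVec_continuous' {N d : ℕ} (A : Matrix (Fin N) (Fin d) ℝ) :
    Continuous (A.mulVec) := by
  have h : Continuous (A.mulVecLin) := A.mulVecLin.continuous_of_finiteDimensional
  have : (A.mulVec) = fun x => A.mulVecLin x := by
    funext x; simp [Matrix.mulVecLin_apply]
  rw [this]; exact h

/-- basic properties of the set of ℓ¹-minimizers. -/
theorem Lmin_basic_properties {N d : ℕ}
    (A : Matrix (Fin N) (Fin d) ℝ) (y : Fin N → ℝ)
    (hex : ∃ x : Fin d → ℝ, A.mulVec x = y)
    (hy : y ≠ 0)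
    (hker : ∃ n : Fin d → ℝ, n ≠ 0 ∧ A.mulVec n = 0) :
    (Lmin A y).Nonempty ∧ Convex ℝ (Lmin A y) ∧ IsCompact (Lmin A y) ∧
    (0 : Fin d → ℝ) ∉ Lmin A y ∧
    ∃ σ : Fin d → ℝ, (∀ i, σ i = 1 ∨ σ i = -1) ∧
      ∀ x ∈ Lmin A y, ∀ i, 0 ≤ σ i * x i := by
  classical
  obtain ⟨x0, hx0⟩ := hex
  have hSclosed : IsClosed {x : Fin d → ℝ | A.mulVec x = y} :=
    isClosed_eq (mulVec_continuous' A) continuous_const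
  -- sublevel sets are compact
  have hKcompact : ∀ c : ℝ,
      IsCompact ({x : Fin d → ℝ | A.mulVec x = y} ∩ {x | l1 x ≤ c}) := by
    intro c
    apply Metric.isCompact_of_isClosed_isBounded
    · exact hSclosed.inter (isClosed_le l1_continuous continuous_const)
    · rw [Metric.isBounded_iff_subset_closedBall 0]
      refine ⟨max c 0, fun x hx => ?_⟩
      rw [Metric.mem_closedBall, dist_zero_right]
      refine pi_norm_le_iff_of_nonneg (le_max_right _ _) |>.2 fun i => ?_
      calc ‖x i‖ = |x i| := rfl
        _ ≤ l1 x := abs_le_l1 x i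
        _ ≤ c := hx.2
        _ ≤ max c 0 := le_max_left _ _
  -- existence of a minimizer
  have hKne : ({x : Fin d → ℝ | A.mulVec x = y} ∩ {x | l1 x ≤ l1 x0}).Nonempty :=
    ⟨x0, hx0, show l1 x0 ≤ l1 x0 from le_rfl⟩
  obtain ⟨xm, hxmK, hxmmin⟩ := (hKcompact (l1 x0)).exists_isMinOn hKne
    (l1_continuous.continuousOn)
  have hxmLmin : xm ∈ Lmin A y := by
    refine ⟨hxmK.1, fun z hz => ?_⟩
    by_cases h : l1 z ≤ l1 x0
    · exact hxmmin ⟨hz, h⟩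
    · exact le_trans (hxmmin ⟨hx0, show l1 x0 ≤ l1 x0 from le_rfl⟩) (le_of_not_ge h)
  have hne : (Lmin A y).Nonempty := ⟨xm, hxmLmin⟩
  -- all minimizers have the same l1 norm
  have hval : ∀ x ∈ Lmin A y, l1 x = l1 xm := fun x hx =>
    le_antisymm (hx.2 xm hxmLmin.1) (hxmLmin.2 x hx.1)
  -- convexity
  have hconv : Convex ℝ (Lmin A y) := by
    rintro x hx x' hx' a b ha hb hab
    refine ⟨?_, fun z hz => ?_⟩
    · rw [Matrix.mulVec_add, Matrix.mulVec_smul, Matrix.mulVec_smul, hx.1, hx'.1,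
        ← add_smul, hab, one_smul]
    · calc l1 (a • x + b • x') ≤ a * l1 x + b * l1 x' := l1_combo x x' ha hb
        _ = a * l1 xm + b * l1 xm := by rw [hval x hx, hval x' hx']
        _ = l1 xm := by rw [← add_mul, hab, one_mul]
        _ ≤ l1 z := hxmLmin.2 z hz
  -- compactness : Lmin is the intersection
  have hLeq : Lmin A y = {x : Fin d → ℝ | A.mulVec x = y} ∩ {x | l1 x ≤ l1 xm} := by
    ext x
    constructor
    · intro hx; exact ⟨hx.1, hx.2 xm hxmLmin.1⟩
    · intro hx; exact ⟨hx.1, fun z hz => le_trans hx.2 (hxmLmin.2 z hz)⟩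
  have hcomp : IsCompact (Lmin A y) := hLeq ▸ hKcompact (l1 xm)
  -- 0 ∉ Lmin
  have hzero : (0 : Fin d → ℝ) ∉ Lmin A y := by
    intro h
    apply hy
    rw [← h.1, Matrix.mulVec_zero]
  -- key equality: for minimizers, termwise |x i + x' i| = |x i| + |x' i|
  have hkey : ∀ x ∈ Lmin A y, ∀ x' ∈ Lmin A y, ∀ i,
      |(1/2 : ℝ) * x i + (1/2 : ℝ) * x' i| = (1/2 : ℝ) * |x i| + (1/2 : ℝ) * |x' i| := by
    intro x hx x' hx' i
    set m := (1/2 : ℝ) • x + (1/2 : ℝ) • x' with hm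
    have hmLmin : m ∈ Lmin A y := hconv hx hx' (by norm_num) (by norm_num) (by norm_num)
    have hsum : ∑ j, |m j| = ∑ j, ((1/2 : ℝ) * |x j| + (1/2 : ℝ) * |x' j|) := by
      have h1 : ∑ j, |m j| = l1 m := rfl
      have h2 : ∑ j, ((1/2 : ℝ) * |x j| + (1/2 : ℝ) * |x' j|)
          = (1/2 : ℝ) * l1 x + (1/2 : ℝ) * l1 x' := by
        rw [Finset.sum_add_distrib, ← Finset.mul_sum, ← Finset.mul_sum]; rfl
      rw [h1, h2, hval m hmLmin, hval x hx, hval x' hx']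
      ring
    have hle : ∀ j ∈ Finset.univ, |m j| ≤ (1/2 : ℝ) * |x j| + (1/2 : ℝ) * |x' j| := by
      intro j _
      simp only [hm, Pi.add_apply, Pi.smul_apply, smul_eq_mul]
      calc |(1/2 : ℝ) * x j + (1/2 : ℝ) * x' j|
          ≤ |(1/2 : ℝ) * x j| + |(1/2 : ℝ) * x' j| := abs_add_le _ _
        _ = (1/2 : ℝ) * |x j| + (1/2 : ℝ) * |x' j| := by
            rw [abs_mul, abs_mul, abs_of_nonneg (by norm_num : (0:ℝ) ≤ 1/2)]
    have := (Finset.sum_eq_sum_iff_of_le hle).mp hsum i (Finset.mem_univ i)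
    simpa [hm] using this
  -- no two minimizers have strictly opposite signs at a coordinate
  have hsign : ∀ x ∈ Lmin A y, ∀ x' ∈ Lmin A y, ∀ i, ¬(0 < x i ∧ x' i < 0) := by
    rintro x hx x' hx' i ⟨h1, h2⟩
    have h := hkey x hx x' hx' i
    rcases abs_cases ((1/2 : ℝ) * x i + (1/2 : ℝ) * x' i) with ⟨ha, _⟩ | ⟨ha, _⟩ <;>
      rw [ha, abs_of_pos h1, abs_of_neg h2] at h <;> linarith
  -- construct σ
  refine ⟨hne, hconv, hcomp, hzero,
    fun i => if ∃ x ∈ Lmin A y, 0 < x i then 1 else -1,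
    fun i => by by_cases h : ∃ x ∈ Lmin A y, 0 < x i <;> simp [h],
    fun x hx i => ?_⟩
  by_cases h : ∃ x' ∈ Lmin A y, 0 < x' i
  · simp only [h, if_true, one_mul]
    obtain ⟨x', hx', hx'i⟩ := h
    by_contra hneg
    exact hsign x' hx' x hx i ⟨hx'i, lt_of_not_ge hneg⟩
  · simp only [h, if_false, neg_one_mul, neg_nonneg]
    push_neg at h
    exact h x hx
end
end

section
/- Assume A ∈ ℝ^{N×d} and y ∈ ℝ^N satisfy the standing assumption (non-unique case), and let σ ∈ {−1,1}^d be a sign vector such that σ⊙x has all entries ≥ 0 for every x ∈ L_min. Then T = { n ∈ ker(A) : ∑_{i∈S} σ_i·n_i = 0 and n_i = 0 for all i ∈ S^c }. -/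
open scoped BigOperators

noncomputable section

open Classical in
/-- The generalized support S = ∪_{x ∈ L_min} supp(x). -/
def genS {N d : ℕ} (A : Matrix (Fin N) (Fin d) ℝ) (y : Fin N → ℝ) : Finset (Fin d) :=
  Finset.univ.filter (fun i => ∃ x ∈ Lmin A y, x i ≠ 0)

/-- The tangent space T = span{x - x' : x, x' ∈ L_min}. -/
def Tspace {N d : ℕ} (A : Matrix (Fin N) (Fin d) ℝ) (y : Fin N → ℝ) :
    Submodule ℝ (Fin d → ℝ) :=
  Submodule.span ℝ { v | ∃ x ∈ Lmin A y, ∃ x' ∈ Lmin A y, v = x - x' }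

/-- The set of quotients whose supremum is the generalized null space constant ρ(N). -/
def grhoSet {d : ℕ} (S : Finset (Fin d)) (σ : Fin d → ℝ) (Nset : Set (Fin d → ℝ)) :
    Set ℝ :=
  { r | ∃ n ∈ Nset, n ≠ 0 ∧ r = (-∑ i ∈ S, σ i * n i) / ∑ i ∈ Sᶜ, |n i| }

/-- The generalized null space constant ρ(N). -/
def grho {d : ℕ} (S : Finset (Fin d)) (σ : Fin d → ℝ) (Nset : Set (Fin d → ℝ)) : ℝ :=
  sSup (grhoSet S σ Nset)

/-- The set of quotients whose supremum is the generalized null space constant ρ⁻(N). -/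
def grhoMinusSet {d : ℕ} (S : Finset (Fin d)) (σ : Fin d → ℝ) (Nset : Set (Fin d → ℝ)) :
    Set ℝ :=
  { r | ∃ n ∈ Nset, n ≠ 0 ∧
      r = (∑ i ∈ S.filter (fun i => σ i * n i < 0), |n i|) / ∑ i ∈ Sᶜ, |n i| }

/-- The generalized null space constant ρ⁻(N). -/
def grhoMinus {d : ℕ} (S : Finset (Fin d)) (σ : Fin d → ℝ) (Nset : Set (Fin d → ℝ)) : ℝ :=
  sSup (grhoMinusSet S σ Nset)

/-- The set of quotients whose supremum is the generalized null space constant ρ̃(N). -/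
def grhoTildeSet {d : ℕ} (S : Finset (Fin d)) (σ : Fin d → ℝ) (Nset : Set (Fin d → ℝ)) :
    Set ℝ :=
  { r | ∃ n ∈ Nset, n ≠ 0 ∧ r = (∑ i ∈ S, |n i|) / ∑ i ∈ Sᶜ, |n i| }

/-- The generalized null space constant ρ̃(N). -/
def grhoTilde {d : ℕ} (S : Finset (Fin d)) (σ : Fin d → ℝ) (Nset : Set (Fin d → ℝ)) : ℝ :=
  sSup (grhoTildeSet S σ Nset)

/-!
Every minimizer vanishes off `S` and has the sign pattern `σ` on `S`, so on `L_min` the ℓ¹-norm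
agrees with the linear functional `x ↦ ∑_{i ∈ S} σ i * x i`; hence the differences of minimizers
satisfy the three linear conditions. Conversely, `L_min` is convex, so the centroid of minimizers
`x⁽ⁱ⁾` with `x⁽ⁱ⁾ i ≠ 0` (`i ∈ S`) is a minimizer `x̄` with `σ i * x̄ i > 0` on all of `S`. For `n`
satisfying the conditions and small `ε > 0`, `x̄ + ε n` is feasible, supported in `S` with sign
pattern `σ`, and has the same value of the functional as `x̄`: it is a minimizer, and
`n = ε⁻¹ ((x̄ + ε n) - x̄) ∈ T`.
-/

section L1

variable {d : ℕ}

lemma l1_add_le (x z : Fin d → ℝ) : l1 (x + z) ≤ l1 x + l1 z := by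
  simpa only [l1, Pi.add_apply, ← Finset.sum_add_distrib] using
    Finset.sum_le_sum fun i _ => abs_add_le (x i) (z i)

lemma l1_smul (a : ℝ) (x : Fin d → ℝ) : l1 (a • x) = |a| * l1 x := by
  simp only [l1, Pi.smul_apply, smul_eq_mul, abs_mul, Finset.mul_sum]

lemma l1_eq_sum_mul {s : Finset (Fin d)} {σ x : Fin d → ℝ} (hσ : ∀ i, σ i = 1 ∨ σ i = -1)
    (hsign : ∀ i ∈ s, 0 ≤ σ i * x i) (hx : ∀ i ∉ s, x i = 0) :
    l1 x = ∑ i ∈ s, σ i * x i := by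
  rw [l1, ← Finset.sum_subset (Finset.subset_univ s) fun i _ hi => by rw [hx i hi, abs_zero]]
  refine Finset.sum_congr rfl fun i hi => ?_
  rw [← abs_of_nonneg (hsign i hi), abs_mul]
  rcases hσ i with h | h <;> simp [h]

end L1

lemma exists_pos_forall_pos_add_mul {ι : Type*} (s : Finset ι) {a : ι → ℝ} (b : ι → ℝ)
    (ha : ∀ i ∈ s, 0 < a i) : ∃ ε > 0, ∀ i ∈ s, 0 < a i + ε * b i := by
  have hnear : ∀ᶠ ε in nhdsWithin (0 : ℝ) (Set.Ioi 0), ∀ i ∈ s, 0 < a i + ε * b i := by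
    refine nhdsWithin_le_nhds ((Filter.eventually_all_finset s).2 fun i hi => ?_)
    have hcont : Continuous fun ε : ℝ => a i + ε * b i := by fun_prop
    exact continuousAt_const.eventually_lt hcont.continuousAt (by simpa using ha i hi)
  exact (hnear.and self_mem_nhdsWithin).exists.imp fun ε h => ⟨h.2, h.1⟩

section Lmin

variable {N d : ℕ} {A : Matrix (Fin N) (Fin d) ℝ} {y : Fin N → ℝ}

lemma mem_genS {i : Fin d} : i ∈ genS A y ↔ ∃ x ∈ Lmin A y, x i ≠ 0 := by
  simp [genS]

lemma eq_zero_of_mem_Lmin_of_notMem_genS {x : Fin d → ℝ} (hx : x ∈ Lmin A y) {i : Fin d}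
    (hi : i ∉ genS A y) : x i = 0 := by
  by_contra h
  exact hi (mem_genS.2 ⟨x, hx, h⟩)

lemma l1_eq_of_mem_Lmin {x x' : Fin d → ℝ} (hx : x ∈ Lmin A y) (hx' : x' ∈ Lmin A y) :
    l1 x = l1 x' :=
  le_antisymm (hx.2 x' hx'.1) (hx'.2 x hx.1)

lemma convex_Lmin : Convex ℝ (Lmin A y) := by
  intro x hx z hz a b ha hb hab
  refine ⟨?_, fun w hw => ?_⟩
  · rw [Matrix.mulVec_add, Matrix.mulVec_smul, Matrix.mulVec_smul, hx.1, hz.1, ← add_smul, hab,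
      one_smul]
  · calc l1 (a • x + b • z) ≤ a * l1 x + b * l1 z := by
          simpa only [l1_smul, abs_of_nonneg ha, abs_of_nonneg hb] using l1_add_le (a • x) (b • z)
      _ ≤ a * l1 w + b * l1 w := by gcongr; exacts [hx.2 w hw, hz.2 w hw]
      _ = l1 w := by rw [← add_mul, hab, one_mul]

variable {σ : Fin d → ℝ} (hσ : ∀ i, σ i = 1 ∨ σ i = -1)
  (hσsign : ∀ x ∈ Lmin A y, ∀ i, 0 ≤ σ i * x i)
include hσ hσsign

lemma l1_eq_sum_genS_of_mem_Lmin {x : Fin d → ℝ} (hx : x ∈ Lmin A y) :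
    l1 x = ∑ i ∈ genS A y, σ i * x i :=
  l1_eq_sum_mul hσ (fun i _ => hσsign x hx i) fun _ => eq_zero_of_mem_Lmin_of_notMem_genS hx

lemma exists_mem_Lmin_forall_pos (hS : (genS A y).Nonempty) :
    ∃ x ∈ Lmin A y, ∀ i ∈ genS A y, 0 < σ i * x i := by
  choose c hc hci using fun j : genS A y => mem_genS.1 j.2
  set w : ℝ := ((genS A y).card : ℝ)⁻¹
  have hw : 0 < w := inv_pos.2 (Nat.cast_pos.2 hS.card_pos)
  refine ⟨∑ j, w • c j, convex_Lmin.sum_mem (fun _ _ => hw.le) ?_ fun j _ => hc j,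
    fun i hi => ?_⟩
  · simp [w, hS.card_pos.ne']
  have hσi : σ i ≠ 0 := by rcases hσ i with h | h <;> simp [h]
  have hterm : ∀ j, 0 ≤ w * (σ i * c j i) := fun j => mul_nonneg hw.le (hσsign _ (hc j) i)
  calc 0 < ∑ j, w * (σ i * c j i) :=
        Finset.sum_pos' (fun j _ => hterm j) ⟨⟨i, hi⟩, Finset.mem_univ _,
          mul_pos hw ((hσsign _ (hc _) i).lt_of_ne (mul_ne_zero hσi (hci ⟨i, hi⟩)).symm)⟩
    _ = σ i * (∑ j, w • c j) i := by
        simp only [Finset.sum_apply, Pi.smul_apply, smul_eq_mul, Finset.mul_sum, mul_left_comm]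

end Lmin

section Face

variable {N d : ℕ}

def faceDirections (A : Matrix (Fin N) (Fin d) ℝ) (S : Finset (Fin d)) (σ : Fin d → ℝ) :
    Submodule ℝ (Fin d → ℝ) :=
  LinearMap.ker A.mulVecLin ⊓
    LinearMap.ker (∑ i ∈ S, σ i • LinearMap.proj i : (Fin d → ℝ) →ₗ[ℝ] ℝ) ⊓
    ⨅ i ∈ Sᶜ, LinearMap.ker (LinearMap.proj i : (Fin d → ℝ) →ₗ[ℝ] ℝ)

lemma mem_faceDirections {A : Matrix (Fin N) (Fin d) ℝ} {S : Finset (Fin d)} {σ n : Fin d → ℝ} :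
    n ∈ faceDirections A S σ ↔
      A.mulVec n = 0 ∧ ∑ i ∈ S, σ i * n i = 0 ∧ ∀ i ∈ Sᶜ, n i = 0 := by
  simp [faceDirections, and_assoc]

variable {A : Matrix (Fin N) (Fin d) ℝ} {y : Fin N → ℝ} {σ : Fin d → ℝ}
  (hσ : ∀ i, σ i = 1 ∨ σ i = -1) (hσsign : ∀ x ∈ Lmin A y, ∀ i, 0 ≤ σ i * x i)
include hσ hσsign

lemma Tspace_le_faceDirections : Tspace A y ≤ faceDirections A (genS A y) σ := by
  refine Submodule.span_le.2 ?_
  rintro _ ⟨x, hx, x', hx', rfl⟩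
  refine mem_faceDirections.2 ⟨?_, ?_, fun i hi => ?_⟩
  · rw [Matrix.mulVec_sub, hx.1, hx'.1, sub_self]
  · simp only [Pi.sub_apply, mul_sub, Finset.sum_sub_distrib,
      ← l1_eq_sum_genS_of_mem_Lmin hσ hσsign hx, ← l1_eq_sum_genS_of_mem_Lmin hσ hσsign hx',
      l1_eq_of_mem_Lmin hx hx', sub_self]
  · have hi : i ∉ genS A y := Finset.mem_compl.1 hi
    simp [eq_zero_of_mem_Lmin_of_notMem_genS hx hi, eq_zero_of_mem_Lmin_of_notMem_genS hx' hi]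

lemma add_smul_mem_Lmin {x n : Fin d → ℝ} (hx : x ∈ Lmin A y)
    (hn : n ∈ faceDirections A (genS A y) σ) {ε : ℝ}
    (hsign : ∀ i ∈ genS A y, 0 ≤ σ i * (x i + ε * n i)) : x + ε • n ∈ Lmin A y := by
  obtain ⟨hAn, hσn, hnS⟩ := mem_faceDirections.1 hn
  refine ⟨by rw [Matrix.mulVec_add, Matrix.mulVec_smul, hx.1, hAn, smul_zero, add_zero],
    fun w hw => ?_⟩
  have hsupp : ∀ i ∉ genS A y, (x + ε • n) i = 0 := fun i hi => by
    simp [eq_zero_of_mem_Lmin_of_notMem_genS hx hi, hnS i (Finset.mem_compl.2 hi)]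
  calc l1 (x + ε • n) = ∑ i ∈ genS A y, σ i * (x + ε • n) i := l1_eq_sum_mul hσ hsign hsupp
    _ = ∑ i ∈ genS A y, σ i * x i + ε * ∑ i ∈ genS A y, σ i * n i := by
        rw [Finset.mul_sum, ← Finset.sum_add_distrib]
        refine Finset.sum_congr rfl fun i _ => ?_
        simp only [Pi.add_apply, Pi.smul_apply, smul_eq_mul]
        ring
    _ = l1 x := by rw [hσn, mul_zero, add_zero, l1_eq_sum_genS_of_mem_Lmin hσ hσsign hx]
    _ ≤ l1 w := hx.2 w hw

lemma faceDirections_le_Tspace : faceDirections A (genS A y) σ ≤ Tspace A y := by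
  intro n hn
  obtain rfl | ⟨j, hj⟩ := eq_or_ne n 0 |>.imp id Function.ne_iff.1
  · exact zero_mem _
  have hjS : j ∈ genS A y := by_contra fun h => hj ((mem_faceDirections.1 hn).2.2 j
    (Finset.mem_compl.2 h))
  obtain ⟨x, hx, hpos⟩ := exists_mem_Lmin_forall_pos hσ hσsign ⟨j, hjS⟩
  obtain ⟨ε, hε, hεpos⟩ := exists_pos_forall_pos_add_mul (genS A y) (fun i => σ i * n i) hpos
  have hz : x + ε • n ∈ Lmin A y :=
    add_smul_mem_Lmin hσ hσsign hx hn fun i hi => by linarith [hεpos i hi]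
  have hdiff : x + ε • n - x ∈ Tspace A y := Submodule.subset_span ⟨_, hz, x, hx, rfl⟩
  rw [add_sub_cancel_left] at hdiff
  simpa [smul_smul, hε.ne'] using (Tspace A y).smul_mem ε⁻¹ hdiff

lemma Tspace_eq_faceDirections : Tspace A y = faceDirections A (genS A y) σ :=
  le_antisymm (Tspace_le_faceDirections hσ hσsign) (faceDirections_le_Tspace hσ hσsign)

end Face

theorem Tspace_characterization_general {N d : ℕ}
    (A : Matrix (Fin N) (Fin d) ℝ) (y : Fin N → ℝ)
    (σ : Fin d → ℝ) (hσ : ∀ i, σ i = 1 ∨ σ i = -1)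
    (hσsign : ∀ x ∈ Lmin A y, ∀ i, 0 ≤ σ i * x i) :
    ∀ n : Fin d → ℝ, n ∈ Tspace A y ↔
      (A.mulVec n = 0 ∧ (∑ i ∈ genS A y, σ i * n i) = 0 ∧
        ∀ i ∈ (genS A y)ᶜ, n i = 0) := by
  intro n
  rw [Tspace_eq_faceDirections hσ hσsign, mem_faceDirections]

/-- characterization of the tangent space T. -/
theorem Tspace_characterization {N d : ℕ}
    (A : Matrix (Fin N) (Fin d) ℝ) (y : Fin N → ℝ)
    (hex : ∃ x : Fin d → ℝ, A.mulVec x = y)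
    (hy : y ≠ 0)
    (hker : ∃ n : Fin d → ℝ, n ≠ 0 ∧ A.mulVec n = 0)
    (σ : Fin d → ℝ) (hσ : ∀ i, σ i = 1 ∨ σ i = -1)
    (hσsign : ∀ x ∈ Lmin A y, ∀ i, 0 ≤ σ i * x i) :
    ∀ n : Fin d → ℝ, n ∈ Tspace A y ↔
      (A.mulVec n = 0 ∧ (∑ i ∈ genS A y, σ i * n i) = 0 ∧
        ∀ i ∈ (genS A y)ᶜ, n i = 0) :=
  Tspace_characterization_general A y σ hσ hσsign
end
end

section
/- Let D ≥ 3 be an integer. Then the map [0,∞) → ℝ, t ↦ t·h_D^{-1}(t), is convex, where h_D^{-1} denotes the inverse of h_D. -/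
open scoped BigOperators

noncomputable section

/-- The function h_D(z) = (1-z)^{-D/(D-2)} - (1+z)^{-D/(D-2)}; on (-1,1) it is a strictly
increasing bijection onto ℝ. -/
def hDfun (D : ℕ) (z : ℝ) : ℝ :=
  (1 - z) ^ (-(D : ℝ) / ((D : ℝ) - 2)) - (1 + z) ^ (-(D : ℝ) / ((D : ℝ) - 2))

/-- The inverse h_D^{-1} : ℝ → (-1,1) of h_D restricted to (-1,1). -/
def hDInv (D : ℕ) (u : ℝ) : ℝ :=
  haveI : Nonempty (Set.Ioo (-1 : ℝ) 1) := ⟨⟨0, by norm_num [Set.mem_Ioo]⟩⟩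
  (Function.invFun (fun z : Set.Ioo (-1 : ℝ) 1 => hDfun D z.1) u).1

/-- q_D(u) = ∫₀ᵘ h_D^{-1}(v) dv. -/
def qDfun (D : ℕ) (u : ℝ) : ℝ := ∫ v in (0:ℝ)..u, hDInv D v

/-- The deep potential Q^D_α. -/
def Qpot {d : ℕ} (D : ℕ) (α : ℝ) (z : Fin d → ℝ) : ℝ :=
  ∑ i, α * qDfun D (z i / α)

/-- The Bregman divergence of the deep potential Q^D_α; its gradient at q has entries
`h_D^{-1}(q i / α)`. -/
def DQ {d : ℕ} (D : ℕ) (α : ℝ) (p q : Fin d → ℝ) : ℝ :=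
  Qpot D α p - Qpot D α q - ∑ i, hDInv D (q i / α) * (p i - q i)

/-! Write `h = hExp p` with `p = D / (D - 2) ≥ 1` and `g = h⁻¹`. For `z = g t` we have
`t = h z`, so `(t * g t)' = z + h z / h' z`; as `g` is increasing, convexity reduces to
monotonicity of `z ↦ z + h z / h' z` on `(-1, 1)`, i.e. to `h h'' ≤ 2 h'²`. With
`a = (1 - z)^(-p-1)` and `b = (1 + z)^(-p-1)` this reads
`p (p + 1) (a (1 - z) - b (1 + z)) (a / (1 - z) - b / (1 + z)) ≤ 2 p² (a + b)²`,
which follows from `x / y + y / x ≥ 2` and `p + 1 ≤ 2 p`. -/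

open Set Filter Topology

theorem convexOn_univ_mul_rightInverse {s : Set ℝ} {H H' g : ℝ → ℝ}
    (hgs : ∀ u, g u ∈ s) (hHg : Function.RightInverse g H) (hg : Monotone g)
    (hg' : ∀ u, HasDerivAt g (H' (g u))⁻¹ u)
    (hmono : MonotoneOn (fun z => z + H z / H' z) s) :
    ConvexOn ℝ univ fun t => t * g t := by
  have hderiv : ∀ t, HasDerivAt (fun t => t * g t) (g t + H (g t) / H' (g t)) t := fun t => by
    refine ((hasDerivAt_id t).mul (hg' t)).congr_deriv ?_
    rw [hHg t, id, one_mul, div_eq_mul_inv]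
  refine Monotone.convexOn_univ_of_deriv (fun t => (hderiv t).differentiableAt) ?_
  intro a b hab
  rw [(hderiv a).deriv, (hderiv b).deriv]
  exact hmono (hgs a) (hgs b) (hg hab)

def hExp (p z : ℝ) : ℝ := (1 - z) ^ (-p) - (1 + z) ^ (-p)

def hExpDeriv (p z : ℝ) : ℝ := p * ((1 - z) ^ (-p - 1) + (1 + z) ^ (-p - 1))

def hExpDeriv2 (p z : ℝ) : ℝ := p * (p + 1) * ((1 - z) ^ (-p - 2) - (1 + z) ^ (-p - 2))

section hExp

variable {p z : ℝ}

theorem hDfun_eq_hExp (D : ℕ) : hDfun D = hExp ((D : ℝ) / (D - 2)) := by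
  funext z
  simp only [hDfun, hExp, neg_div]

theorem hExp_neg (p z : ℝ) : hExp p (-z) = -hExp p z := by
  simp only [hExp, sub_neg_eq_add, ← sub_eq_add_neg, neg_sub]

theorem hasDerivAt_hExp (hz : z ∈ Ioo (-1 : ℝ) 1) : HasDerivAt (hExp p) (hExpDeriv p z) z := by
  have hx : 1 - z ≠ 0 := by linarith [hz.2]
  have hy : 1 + z ≠ 0 := by linarith [hz.1]
  refine (((hasDerivAt_id' z).const_sub 1).rpow_const (p := -p) (Or.inl hx) |>.sub
    (((hasDerivAt_id' z).const_add 1).rpow_const (p := -p) (Or.inl hy))).congr_deriv ?_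
  simp only [hExpDeriv]
  ring

theorem hasDerivAt_hExpDeriv (hz : z ∈ Ioo (-1 : ℝ) 1) :
    HasDerivAt (hExpDeriv p) (hExpDeriv2 p z) z := by
  have hx : 1 - z ≠ 0 := by linarith [hz.2]
  have hy : 1 + z ≠ 0 := by linarith [hz.1]
  refine (((((hasDerivAt_id' z).const_sub 1).rpow_const (p := -p - 1) (Or.inl hx)).add
    (((hasDerivAt_id' z).const_add 1).rpow_const (p := -p - 1) (Or.inl hy))).const_mul p
    ).congr_deriv ?_
  simp only [hExpDeriv2, show -p - 1 - 1 = -p - 2 by ring]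
  ring

theorem hExpDeriv_pos (hp : 0 < p) (hz : z ∈ Ioo (-1 : ℝ) 1) : 0 < hExpDeriv p z := by
  have hx : 0 < 1 - z := by linarith [hz.2]
  have hy : 0 < 1 + z := by linarith [hz.1]
  unfold hExpDeriv
  positivity

theorem strictMonoOn_hExp (hp : 0 < p) : StrictMonoOn (hExp p) (Ioo (-1) 1) :=
  strictMonoOn_of_deriv_pos (convex_Ioo _ _)
    (fun _ hz => (hasDerivAt_hExp hz).continuousAt.continuousWithinAt)
    fun z hz => by
      rw [interior_Ioo] at hz
      exact (hasDerivAt_hExp hz).deriv ▸ hExpDeriv_pos hp hz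

theorem exists_le_hExp (hp : 0 < p) {u : ℝ} (hu : 0 ≤ u) :
    ∃ w ∈ Ico (0 : ℝ) 1, u ≤ hExp p w := by
  set c := (u + 1) ^ (-p⁻¹)
  have hc0 : 0 < c := by positivity
  have hc1 : c ≤ 1 := Real.rpow_le_one_of_one_le_of_nonpos (by linarith) (by simp [hp.le])
  refine ⟨1 - c, ⟨by linarith, by linarith⟩, ?_⟩
  have hleft : (1 - (1 - c)) ^ (-p) = u + 1 := by
    rw [sub_sub_cancel, ← Real.rpow_mul (by linarith), neg_mul_neg, inv_mul_cancel₀ hp.ne',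
      Real.rpow_one]
  have hright : (1 + (1 - c)) ^ (-p) ≤ 1 :=
    Real.rpow_le_one_of_one_le_of_nonpos (by linarith) (by linarith)
  rw [hExp, hleft]
  linarith

theorem surjOn_hExp (hp : 0 < p) : SurjOn (hExp p) (Ioo (-1) 1) univ := by
  intro u _
  obtain ⟨w, ⟨hw0, hw1⟩, hw⟩ := exists_le_hExp hp (abs_nonneg u)
  have hsub : Icc (-w) w ⊆ Ioo (-1) 1 := fun z hz => ⟨by linarith [hz.1], by linarith [hz.2]⟩
  have hcont : ContinuousOn (hExp p) (Icc (-w) w) := fun z hz =>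
    (hasDerivAt_hExp (hsub hz)).continuousAt.continuousWithinAt
  have hu : u ∈ Icc (hExp p (-w)) (hExp p w) := by
    rw [hExp_neg]
    exact ⟨by linarith [neg_abs_le u], by linarith [le_abs_self u]⟩
  obtain ⟨z, hz, rfl⟩ := intermediate_value_Icc (by linarith) hcont hu
  exact ⟨z, hsub hz, rfl⟩

theorem mul_sub_mul_div_sub_div_le_sq {a b x y : ℝ} (hab : 0 ≤ a * b) (hx : 0 < x)
    (hy : 0 < y) :
    (a * x - b * y) * (a / x - b / y) ≤ (a - b) ^ 2 := by
  have h : (a * x - b * y) * (a / x - b / y) = (a - b) ^ 2 - a * b * (x - y) ^ 2 / (x * y) := by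
    field_simp
    ring
  have : 0 ≤ a * b * (x - y) ^ 2 / (x * y) := by positivity
  linarith

theorem hExp_mul_hExpDeriv2_le (hp : 1 ≤ p) (hz : z ∈ Ioo (-1 : ℝ) 1) :
    hExp p z * hExpDeriv2 p z ≤ 2 * hExpDeriv p z ^ 2 := by
  have hx : 0 < 1 - z := by linarith [hz.2]
  have hy : 0 < 1 + z := by linarith [hz.1]
  set a := (1 - z) ^ (-p - 1)
  set b := (1 + z) ^ (-p - 1)
  have ha : 0 < a := by positivity
  have hb : 0 < b := by positivity
  have hH : hExp p z = a * (1 - z) - b * (1 + z) := by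
    rw [hExp, ← Real.rpow_add_one hx.ne', ← Real.rpow_add_one hy.ne', sub_add_cancel]
  have hH2 : hExpDeriv2 p z = p * (p + 1) * (a / (1 - z) - b / (1 + z)) := by
    rw [hExpDeriv2, ← Real.rpow_sub_one hx.ne', ← Real.rpow_sub_one hy.ne', sub_sub,
      one_add_one_eq_two]
  calc hExp p z * hExpDeriv2 p z
      = p * (p + 1) * ((a * (1 - z) - b * (1 + z)) * (a / (1 - z) - b / (1 + z))) := by
        rw [hH, hH2]; ring
    _ ≤ p * (p + 1) * (a - b) ^ 2 := by
        gcongr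
        exact mul_sub_mul_div_sub_div_le_sq (mul_pos ha hb).le hx hy
    _ ≤ 2 * p ^ 2 * (a + b) ^ 2 :=
        mul_le_mul (by nlinarith) (by nlinarith) (sq_nonneg _) (by positivity)
    _ = 2 * hExpDeriv p z ^ 2 := by rw [hExpDeriv]; ring

theorem monotoneOn_add_hExp_div_hExpDeriv (hp : 1 ≤ p) :
    MonotoneOn (fun z => z + hExp p z / hExpDeriv p z) (Ioo (-1) 1) := by
  have hderiv : ∀ z ∈ Ioo (-1 : ℝ) 1, HasDerivAt (fun z => z + hExp p z / hExpDeriv p z)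
      (1 + (hExpDeriv p z * hExpDeriv p z - hExp p z * hExpDeriv2 p z) / hExpDeriv p z ^ 2) z :=
    fun z hz => (hasDerivAt_id' z).add
      ((hasDerivAt_hExp hz).div (hasDerivAt_hExpDeriv hz) (hExpDeriv_pos (by linarith) hz).ne')
  refine monotoneOn_of_deriv_nonneg (convex_Ioo _ _)
    (fun z hz => (hderiv z hz).continuousAt.continuousWithinAt)
    (fun z hz => (hderiv z (interior_subset hz)).differentiableAt.differentiableWithinAt) ?_
  intro z hz
  rw [interior_Ioo] at hz
  have hpos := hExpDeriv_pos (by linarith) hz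
  have hsimp : 1 + (hExpDeriv p z * hExpDeriv p z - hExp p z * hExpDeriv2 p z) / hExpDeriv p z ^ 2
      = (2 * hExpDeriv p z ^ 2 - hExp p z * hExpDeriv2 p z) / hExpDeriv p z ^ 2 := by
    field_simp
    ring
  rw [(hderiv z hz).deriv, hsimp]
  exact div_nonneg (by linarith [hExp_mul_hExpDeriv2_le hp hz]) (sq_nonneg _)

end hExp

section hDInv

variable {D : ℕ}

theorem one_le_natCast_div_sub_two (hD : 2 < D) : 1 ≤ (D : ℝ) / (D - 2) := by
  have : (2 : ℝ) < D := by exact_mod_cast hD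
  exact (one_le_div (by linarith)).2 (by linarith)

theorem natCast_div_sub_two_pos (hD : 2 < D) : 0 < (D : ℝ) / (D - 2) :=
  zero_lt_one.trans_le (one_le_natCast_div_sub_two hD)

theorem hDInv_mem (D : ℕ) (u : ℝ) : hDInv D u ∈ Ioo (-1 : ℝ) 1 :=
  Subtype.property _

theorem hExp_hDInv (hD : 2 < D) (u : ℝ) : hExp ((D : ℝ) / (D - 2)) (hDInv D u) = u := by
  obtain ⟨z, hz, hzu⟩ := surjOn_hExp (natCast_div_sub_two_pos hD) (mem_univ u)
  have : Nonempty (Ioo (-1 : ℝ) 1) := ⟨⟨z, hz⟩⟩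
  rw [← hDfun_eq_hExp]
  exact Function.invFun_eq (f := fun z : Ioo (-1 : ℝ) 1 => hDfun D z)
    ⟨⟨z, hz⟩, by rw [hDfun_eq_hExp]; exact hzu⟩

theorem hDInv_hExp (hD : 2 < D) {z : ℝ} (hz : z ∈ Ioo (-1 : ℝ) 1) :
    hDInv D (hExp ((D : ℝ) / (D - 2)) z) = z :=
  (strictMonoOn_hExp (natCast_div_sub_two_pos hD)).injOn (hDInv_mem D _) hz
    (hExp_hDInv hD _)

theorem strictMono_hDInv (hD : 2 < D) : StrictMono (hDInv D) := fun u v huv =>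
  ((strictMonoOn_hExp (natCast_div_sub_two_pos hD)).lt_iff_lt
    (hDInv_mem D u) (hDInv_mem D v)).1 (by rwa [hExp_hDInv hD, hExp_hDInv hD])

theorem continuous_hDInv (hD : 2 < D) : Continuous (hDInv D) := by
  refine continuous_iff_continuousAt.2 fun u => continuousAt_of_monotoneOn_of_image_mem_nhds
    ((strictMono_hDInv hD).monotone.monotoneOn univ) univ_mem ?_
  rw [image_univ]
  exact mem_of_superset (Ioo_mem_nhds (hDInv_mem D u).1 (hDInv_mem D u).2)
    fun z hz => ⟨_, hDInv_hExp hD hz⟩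

theorem hasDerivAt_hDInv (hD : 2 < D) (u : ℝ) :
    HasDerivAt (hDInv D) (hExpDeriv ((D : ℝ) / (D - 2)) (hDInv D u))⁻¹ u :=
  .of_local_left_inverse (continuous_hDInv hD).continuousAt (hasDerivAt_hExp (hDInv_mem D u))
    (hExpDeriv_pos (natCast_div_sub_two_pos hD) (hDInv_mem D u)).ne'
    (Eventually.of_forall (hExp_hDInv hD))

end hDInv

/-- the map t ↦ t · h_D^{-1}(t) is convex on [0,∞). -/
theorem mul_hDInv_convexOn (D : ℕ) (hD3 : 3 ≤ D) :
    ConvexOn ℝ (Set.Ici (0 : ℝ)) (fun t : ℝ => t * hDInv D t) :=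
  (convexOn_univ_mul_rightInverse (hDInv_mem D) (hExp_hDInv hD3) (strictMono_hDInv hD3).monotone
    (hasDerivAt_hDInv hD3)
    (monotoneOn_add_hExp_div_hExpDeriv (one_le_natCast_div_sub_two hD3))).subset
    (subset_univ _) (convex_Ici 0)
end
end
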